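/- arXiv:1004.4348 — 2 statements merged into one kernel-verified Lean document; each statement's English description precedes it below -/
import Mathlib

section
/- For any natural numbers k ≥ 2 and b with 0 ≤ b ≤ 2^k - 3, the binomial coefficient C(2^k + b, 2^k - 2) is even. -/
/-! By Kummer's theorem, `p ∣ C(a + b, b)` as soon as adding `a` and `b` in base `p` carries.
Here `2 ^ k - 2` and `b + 2` are both below `2 ^ k` while their sum `2 ^ k + b` is not,
so there is a carry into the digit of `2 ^ k`. -/

open Finset

theorem Nat.Prime.dvd_choose_add_of_lt_pow {p k a b : ℕ} (hp : p.Prime) (ha : a < p ^ k)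
    (hb : b < p ^ k) (hab : p ^ k ≤ a + b) : p ∣ (a + b).choose b := by
  have hlog : Nat.log p (a + b) < k + 1 := by
    refine Nat.log_lt_of_lt_pow (by have := pow_pos hp.pos k; omega) ?_
    rw [pow_succ]
    nlinarith [hp.two_le]
  have hcarry : k ∈ {i ∈ Ico 1 (k + 1) | p ^ i ≤ b % p ^ i + a % p ^ i} := by
    have hk : k ≠ 0 := by rintro rfl; rw [pow_zero] at ha hb hab; omega
    rw [mem_filter, mem_Ico, Nat.mod_eq_of_lt ha, Nat.mod_eq_of_lt hb]
    omega
  rw [hp.dvd_iff_one_le_factorization (Nat.choose_pos (Nat.le_add_left b a)).ne',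
    Nat.factorization_choose' hp hlog]
  exact Finset.card_pos.mpr ⟨k, hcarry⟩

/-- For `k ≥ 2` and `b ≤ 2^k - 3`, the binomial coefficient `C(2^k + b, 2^k - 2)` is even. -/
theorem choose_pow_add_sub_two_even (k b : ℕ) (hk : 2 ≤ k) (hb : b ≤ 2 ^ k - 3) :
    Even (Nat.choose (2 ^ k + b) (2 ^ k - 2)) := by
  have h4 : 4 ≤ 2 ^ k := by
    calc 4 = 2 ^ 2 := rfl
      _ ≤ 2 ^ k := Nat.pow_le_pow_right two_pos hk
  have hsum : 2 ^ k + b = (b + 2) + (2 ^ k - 2) := by omega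
  rw [hsum, even_iff_two_dvd]
  exact Nat.prime_two.dvd_choose_add_of_lt_pow (k := k) (by omega) (by omega) (by omega)
end

section
/- For any natural numbers k ≥ 2 and b with 0 ≤ b ≤ 2^k - 3, the sum C(2^k + b, 2^k - 2) + C(2^k + b, b) is odd. -/
open Polynomial

/-- Modulo `p`, `(1 + X) ^ (p ^ k + b) = (1 + X ^ p ^ k) * (1 + X) ^ b`, and the summand
`X ^ p ^ k * (1 + X) ^ b` has no coefficients below degree `p ^ k`. -/
theorem Nat.choose_prime_pow_add_modEq {p : ℕ} [Fact p.Prime] {k m : ℕ} (b : ℕ)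
    (hm : m < p ^ k) : (p ^ k + b).choose m ≡ b.choose m [MOD p] := by
  rw [← ZMod.natCast_eq_natCast_iff, ← coeff_one_add_X_pow, ← coeff_one_add_X_pow, pow_add,
    add_pow_char_pow, one_pow, add_mul, one_mul, coeff_add, coeff_X_pow_mul',
    if_neg hm.not_ge, add_zero]

/-- For `k ≥ 2` and `b ≤ 2^k - 3`, the sum `C(2^k + b, 2^k - 2) + C(2^k + b, b)` is odd. -/
theorem choose_sum_odd (k b : ℕ) (hk : 2 ≤ k) (hb : b ≤ 2 ^ k - 3) :
    Odd (Nat.choose (2 ^ k + b) (2 ^ k - 2) + Nat.choose (2 ^ k + b) b) := by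
  have hpow : 2 ^ 2 ≤ 2 ^ k := Nat.pow_le_pow_right two_pos hk
  have heven : (2 ^ k + b).choose (2 ^ k - 2) ≡ 0 [MOD 2] := by
    simpa [Nat.choose_eq_zero_of_lt (show b < 2 ^ k - 2 by omega)] using
      Nat.choose_prime_pow_add_modEq b (show 2 ^ k - 2 < 2 ^ k by omega)
  have hodd : (2 ^ k + b).choose b ≡ 1 [MOD 2] := by
    simpa using Nat.choose_prime_pow_add_modEq b (show b < 2 ^ k by omega)
  rw [Nat.odd_iff]
  exact heven.add hodd
end
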